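/- arXiv:2309.01136 — 11 statements merged into one kernel-verified Lean document; each statement's English description precedes it below -/
import Mathlib

section
/- Let n and p be positive integers, let a, b : Fin n → ℤ, and let G₁, …, G_p be subsets of Fin n whose union is all of Fin n and which satisfy: for all i < i', for all x ∈ G_i and y ∈ G_{i'}, a x ≤ a y. Let T ⊆ Fin n be a set on which b is constant. Fix an integer k with 0 ≤ k ≤ 2n−2 and let W = {ℓ : 0 ≤ ℓ ≤ n−1, 0 ≤ k−ℓ ≤ n−1, and k−ℓ ∈ T}. If W is nonempty then, letting m be the minimal index i such that G_i ∩ W is nonempty, we have min_{ℓ ∈ W} (a ℓ + b (k−ℓ)) = min_{ℓ ∈ G_m ∩ W} (a ℓ + b (k−ℓ)). -/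
theorem conv_sorted_groups_uniform
    (n p : ℕ) (hn : 0 < n) (hp : 0 < p) (a b : Fin n → ℤ)
    (G : Fin p → Finset (Fin n))
    (hGcover : ∀ x : Fin n, ∃ i, x ∈ G i)
    (hGsorted : ∀ i i' : Fin p, i < i' → ∀ x ∈ G i, ∀ y ∈ G i', a x ≤ a y)
    (T : Finset (Fin n))
    (hT : ∀ x ∈ T, ∀ y ∈ T, b x = b y)
    (k : ℕ) (hk : k ≤ 2 * n - 2)
    (W : Finset (Fin n))
    (hWdef : W = Finset.univ.filter fun ℓ : Fin n =>
        (ℓ : ℕ) ≤ k ∧ ∃ t : Fin n, (t : ℕ) = k - (ℓ : ℕ) ∧ t ∈ T)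
    (hW : W.Nonempty)
    (m : Fin p)
    (hm : (G m ∩ W).Nonempty)
    (hmMin : ∀ i : Fin p, i < m → ¬(G i ∩ W).Nonempty) :
    (W.inf' hW fun ℓ =>
        if h : k - (ℓ : ℕ) < n then a ℓ + b ⟨k - (ℓ : ℕ), h⟩ else 0)
      = (G m ∩ W).inf' hm fun ℓ =>
          if h : k - (ℓ : ℕ) < n then a ℓ + b ⟨k - (ℓ : ℕ), h⟩ else 0 := by
  set f : Fin n → ℤ := fun ℓ =>
    if h : k - (ℓ : ℕ) < n then a ℓ + b ⟨k - (ℓ : ℕ), h⟩ else 0 with hf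
  -- for ℓ ∈ W, k - ℓ < n and k - ℓ ∈ T
  have hWmem : ∀ ℓ ∈ W, ∃ h : k - (ℓ : ℕ) < n,
      (⟨k - (ℓ : ℕ), h⟩ : Fin n) ∈ T ∧ f ℓ = a ℓ + b ⟨k - (ℓ : ℕ), h⟩ := by
    intro ℓ hℓ
    rw [hWdef, Finset.mem_filter] at hℓ
    obtain ⟨-, -, t, ht, htT⟩ := hℓ
    have h : k - (ℓ : ℕ) < n := ht ▸ t.isLt
    refine ⟨h, ?_, by simp [hf, h]⟩
    have : t = (⟨k - (ℓ : ℕ), h⟩ : Fin n) := by ext; exact ht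
    exact this ▸ htT
  apply le_antisymm
  · obtain ⟨ℓ₀, hℓ₀, hval⟩ := Finset.exists_mem_eq_inf' hm f
    rw [hval]
    exact Finset.inf'_le _ (Finset.mem_of_mem_inter_right hℓ₀)
  · apply Finset.le_inf'
    intro ℓ hℓ
    obtain ⟨ℓ₀, hℓ₀, hval⟩ := Finset.exists_mem_eq_inf' hm f
    rw [hval]
    have hℓ₀W : ℓ₀ ∈ W := Finset.mem_of_mem_inter_right hℓ₀
    have hℓ₀G : ℓ₀ ∈ G m := Finset.mem_of_mem_inter_left hℓ₀
    obtain ⟨h0, h0T, h0f⟩ := hWmem ℓ₀ hℓ₀W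
    obtain ⟨h1, h1T, h1f⟩ := hWmem ℓ hℓ
    obtain ⟨i, hi⟩ := hGcover ℓ
    rcases lt_trichotomy i m with him | him | him
    · exact absurd ⟨ℓ, Finset.mem_inter.mpr ⟨hi, hℓ⟩⟩ (hmMin i him)
    · exact hval.symm.trans_le (Finset.inf'_le _ (Finset.mem_inter.mpr ⟨him ▸ hi, hℓ⟩))
    · rw [h0f, h1f]
      have hab : b ⟨k - (ℓ₀ : ℕ), h0⟩ = b ⟨k - (ℓ : ℕ), h1⟩ := hT _ h0T _ h1T
      rw [hab]
      exact add_le_add_left (hGsorted m i him ℓ₀ hℓ₀G ℓ hi) _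
end

section
/- Let n be a positive integer, let A, B : Fin n → Fin n → ℤ, and let M be a nonnegative integer with |A i k| ≤ M and |B k j| ≤ M for all i, j, k. Define A' i k = A i k + 2·(k+1)·M and B' k j = B k j − 2·(k+1)·M (where k+1 is the 1-based index of k). Then: (1) for every i, the function k ↦ A' i k is non-decreasing; (2) for every j, the function k ↦ B' k j is non-increasing; and (3) for all i, j, min_{k} (A' i k + B' k j) = min_{k} (A i k + B k j), i.e., the (min,+) matrix product of A' and B' equals the (min,+) matrix product of A and B. -/
/-!
Adding `2 (k + 1) M` to column `k` of `A` and subtracting it from row `k` of `B` leaves every sum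
`A i k + B k j` unchanged, so the `(min,+)` product is unchanged. Consecutive shifts differ by
`2 M`, which dominates any difference `A i k - A i k'` of entries bounded by `M` in absolute value,
so the shifted rows become monotone; the same argument applied to `-B` gives antitone columns.
-/

theorem monotone_add_of_abs_le_of_gap {ι α : Type*} [PartialOrder ι] [CommRing α]
    [LinearOrder α] [IsStrictOrderedRing α] {f g : ι → α} {M : α} (hf : ∀ k, |f k| ≤ M)
    (hg : ∀ ⦃k k'⦄, k < k' → g k + 2 * M ≤ g k') : Monotone fun k => f k + g k := by
  intro k k' hkk'
  rcases hkk'.lt_or_eq with hlt | rfl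
  · show f k + g k ≤ f k' + g k'
    obtain ⟨-, hk⟩ := abs_le.mp (hf k)
    obtain ⟨hk', -⟩ := abs_le.mp (hf k')
    linarith [hg hlt]
  · exact le_rfl

theorem Fin.two_mul_val_add_one_mul_add_two_mul_le_of_lt {n : ℕ} (M : ℕ) ⦃k k' : Fin n⦄
    (h : k < k') :
    2 * ((k : ℕ) + 1) * (M : ℤ) + 2 * M ≤ 2 * ((k' : ℕ) + 1) * (M : ℤ) := by
  have hkk' : ((k : ℕ) : ℤ) + 1 ≤ (k' : ℕ) := by exact_mod_cast h
  nlinarith [Int.natCast_nonneg M]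

theorem Finset.inf'_add_add_sub_cancel {ι α : Type*} [AddCommGroup α] [SemilatticeInf α]
    {s : Finset ι} (hs : s.Nonempty) (a b d : ι → α) :
    s.inf' hs (fun k => (a k + d k) + (b k - d k)) = s.inf' hs (fun k => a k + b k) := by
  simp only [add_add_sub_cancel]

theorem minplus_matrix_shift_nondecr_nonincr
    (n : ℕ) (hn : 0 < n) (A B : Fin n → Fin n → ℤ) (M : ℕ)
    (hA : ∀ i k : Fin n, |A i k| ≤ (M : ℤ))
    (hB : ∀ k j : Fin n, |B k j| ≤ (M : ℤ)) :
    (∀ i : Fin n, Monotone fun k : Fin n => A i k + 2 * ((k : ℕ) + 1) * (M : ℤ)) ∧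
    (∀ j : Fin n, Antitone fun k : Fin n => B k j - 2 * ((k : ℕ) + 1) * (M : ℤ)) ∧
    (∀ i j : Fin n,
      Finset.univ.inf' ⟨⟨0, hn⟩, Finset.mem_univ _⟩
          (fun k : Fin n =>
            (A i k + 2 * ((k : ℕ) + 1) * (M : ℤ)) +
              (B k j - 2 * ((k : ℕ) + 1) * (M : ℤ)))
        = Finset.univ.inf' ⟨⟨0, hn⟩, Finset.mem_univ _⟩
            (fun k : Fin n => A i k + B k j)) := by
  have gap := Fin.two_mul_val_add_one_mul_add_two_mul_le_of_lt (n := n) M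
  refine ⟨fun i => ?_, fun j => ?_, fun i j => ?_⟩
  · exact monotone_add_of_abs_le_of_gap (hA i) gap
  · have hnegB : ∀ k, |-B k j| ≤ (M : ℤ) := fun k => (abs_neg _).trans_le (hB k j)
    simpa only [neg_add, neg_neg, sub_eq_add_neg] using
      (monotone_add_of_abs_le_of_gap hnegB gap).neg
  · exact Finset.inf'_add_add_sub_cancel _ _ _ _
end

section
/- Let n be a positive integer, let A, B : Fin n → Fin n → ℤ, and let M be a nonnegative integer with |A i k| ≤ M and |B k j| ≤ M for all i, j, k. Define A'' i k = A i k − 2·(k+1)·M and B'' k j = B k j + 2·(k+1)·M (where k+1 is the 1-based index of k). Then: (1) for every i, the function k ↦ A'' i k is non-increasing; (2) for every j, the function k ↦ B'' k j is non-decreasing; and (3) for all i, j, min_{k} (A'' i k + B'' k j) = min_{k} (A i k + B k j), i.e., the (min,+) matrix product of A'' and B'' equals the (min,+) matrix product of A and B. -/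
/-!
Any two entries bounded by `M` in absolute value differ by at most `2M`, so subtracting a shift
that grows by `2M` per index makes every row non-increasing, and adding it makes every column
non-decreasing. The shifts cancel in each sum `A i k + B k j`, so the (min,+) product is unchanged.
-/

section ShiftByIndex

variable {R : Type*} [CommRing R] [LinearOrder R] [IsStrictOrderedRing R] {n : ℕ} {M : R}

theorem antitone_sub_two_mul_succ_mul {f : Fin n → R} (hf : ∀ k, |f k| ≤ M) :
    Antitone fun k : Fin n => f k - 2 * ((k : ℕ) + 1) * M := by
  intro k l hkl
  rcases hkl.eq_or_lt with rfl | hlt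
  · exact le_rfl
  have hM : 0 ≤ M := (abs_nonneg _).trans (hf k)
  have hsucc : ((k : ℕ) : R) + 1 ≤ ((l : ℕ) : R) := by exact_mod_cast Fin.lt_def.mp hlt
  have hdiff : f l - f k ≤ 2 * M := by
    linarith [(abs_le.mp (hf k)).1, (abs_le.mp (hf l)).2]
  show f l - 2 * (((l : ℕ) : R) + 1) * M ≤ f k - 2 * (((k : ℕ) : R) + 1) * M
  linarith [mul_le_mul_of_nonneg_right hsucc hM]

theorem monotone_add_two_mul_succ_mul {f : Fin n → R} (hf : ∀ k, |f k| ≤ M) :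
    Monotone fun k : Fin n => f k + 2 * ((k : ℕ) + 1) * M := by
  have h := antitone_sub_two_mul_succ_mul (f := -f) (M := M) fun k => by
    simpa only [Pi.neg_apply, abs_neg] using hf k
  intro k l hkl
  simpa only [Pi.neg_apply, neg_sub_left, neg_le_neg_iff, add_comm] using h hkl

end ShiftByIndex

theorem minplus_matrix_shift_nonincr_nondecr
    (n : ℕ) (hn : 0 < n) (A B : Fin n → Fin n → ℤ) (M : ℕ)
    (hA : ∀ i k : Fin n, |A i k| ≤ (M : ℤ))
    (hB : ∀ k j : Fin n, |B k j| ≤ (M : ℤ)) :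
    (∀ i : Fin n, Antitone fun k : Fin n => A i k - 2 * ((k : ℕ) + 1) * (M : ℤ)) ∧
    (∀ j : Fin n, Monotone fun k : Fin n => B k j + 2 * ((k : ℕ) + 1) * (M : ℤ)) ∧
    (∀ i j : Fin n,
      Finset.univ.inf' ⟨⟨0, hn⟩, Finset.mem_univ _⟩
          (fun k : Fin n =>
            (A i k - 2 * ((k : ℕ) + 1) * (M : ℤ)) +
              (B k j + 2 * ((k : ℕ) + 1) * (M : ℤ)))
        = Finset.univ.inf' ⟨⟨0, hn⟩, Finset.mem_univ _⟩
            (fun k : Fin n => A i k + B k j)) :=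
  ⟨fun i => antitone_sub_two_mul_succ_mul (hA i),
    fun j => monotone_add_two_mul_succ_mul (hB · j),
    fun i j => by simp only [sub_add_add_cancel]⟩
end

section
/- Let n be a positive integer, let a, b : Fin n → ℤ, and let M be a nonnegative integer with |a i| ≤ M and |b i| ≤ M for all i. Define a' i = a i + 2·i·M and b' i = b i + 2·i·M. Then: (1) the sequences a'₀,…,a'_{n−1} and b'₀,…,b'_{n−1} are both non-decreasing; and (2) for every k with 0 ≤ k ≤ 2n−2, the k-th coordinate of the (min,+) convolution of a' and b' equals c_k + 2·k·M, where c_k is the k-th coordinate of the (min,+) convolution of a and b. -/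
theorem minplus_conv_shift_nondecr
    (n : ℕ) (hn : 0 < n) (a b : Fin n → ℤ) (M : ℕ)
    (ha : ∀ i : Fin n, |a i| ≤ (M : ℤ))
    (hb : ∀ i : Fin n, |b i| ≤ (M : ℤ)) :
    (Monotone fun i : Fin n => a i + 2 * (i : ℕ) * (M : ℤ)) ∧
    (Monotone fun i : Fin n => b i + 2 * (i : ℕ) * (M : ℤ)) ∧
    (∀ k : ℕ, k ≤ 2 * n - 2 →
      ∀ hD : (Finset.univ.filter fun ℓ : Fin n =>
          (ℓ : ℕ) ≤ k ∧ k - (ℓ : ℕ) < n).Nonempty,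
      ((Finset.univ.filter fun ℓ : Fin n =>
            (ℓ : ℕ) ≤ k ∧ k - (ℓ : ℕ) < n).inf' hD fun ℓ =>
          if h : k - (ℓ : ℕ) < n then
            (a ℓ + 2 * (ℓ : ℕ) * (M : ℤ)) +
              (b ⟨k - (ℓ : ℕ), h⟩ + 2 * ((k - (ℓ : ℕ) : ℕ) : ℤ) * (M : ℤ))
          else 0)
        = ((Finset.univ.filter fun ℓ : Fin n =>
              (ℓ : ℕ) ≤ k ∧ k - (ℓ : ℕ) < n).inf' hD fun ℓ =>
            if h : k - (ℓ : ℕ) < n then a ℓ + b ⟨k - (ℓ : ℕ), h⟩ else 0)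
          + 2 * (k : ℤ) * (M : ℤ)) := by
  have mono : ∀ f : Fin n → ℤ, (∀ i, |f i| ≤ (M : ℤ)) →
      Monotone fun i : Fin n => f i + 2 * (i : ℕ) * (M : ℤ) := by
    intro f hf i j hij
    rcases eq_or_lt_of_le hij with rfl | hlt
    · exact le_rfl
    · simp only
      have h1 : f i - f j ≤ 2 * (M : ℤ) := by
        have := abs_le.1 (hf i); have := abs_le.1 (hf j); omega
      have h2 : (i : ℕ) + 1 ≤ (j : ℕ) := Fin.lt_def.mp hlt
      have : (2 : ℤ) * (i : ℕ) * M + 2 * M ≤ 2 * (j : ℕ) * M := by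
        have : ((i : ℕ) : ℤ) + 1 ≤ ((j : ℕ) : ℤ) := by exact_mod_cast h2
        nlinarith [Int.ofNat_nonneg M]
      linarith
  refine ⟨mono a ha, mono b hb, ?_⟩
  intro k hk hD
  have key := Finset.apply_inf'_eq_inf'_comp hD
    (f := fun ℓ : Fin n =>
      if h : k - (ℓ : ℕ) < n then a ℓ + b ⟨k - (ℓ : ℕ), h⟩ else 0)
    (g := fun x : ℤ => x + 2 * (k : ℤ) * (M : ℤ))
    (fun x y => (min_add_add_right x y _).symm)
  simp only [Function.comp] at key
  rw [key]
  apply Finset.inf'_congr _ rfl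
  intro ℓ hℓ
  simp only [Finset.mem_filter] at hℓ
  obtain ⟨-, hle, hlt⟩ := hℓ
  rw [dif_pos hlt, dif_pos hlt]
  have : ((k - (ℓ : ℕ) : ℕ) : ℤ) = (k : ℤ) - (ℓ : ℕ) := by omega
  rw [this]; ring
end

section
/- Let n be a positive integer, let a, b : Fin n → ℤ, and let M be a nonnegative integer with |a i| ≤ M and |b i| ≤ M for all i. Define a'' i = a i − 2·i·M and b'' i = b i − 2·i·M. Then: (1) the sequences a''₀,…,a''_{n−1} and b''₀,…,b''_{n−1} are both non-increasing; and (2) for every k with 0 ≤ k ≤ 2n−2, the k-th coordinate of the (min,+) convolution of a'' and b'' equals c_k − 2·k·M, where c_k is the k-th coordinate of the (min,+) convolution of a and b. -/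
theorem minplus_conv_shift_nonincr
    (n : ℕ) (hn : 0 < n) (a b : Fin n → ℤ) (M : ℕ)
    (ha : ∀ i : Fin n, |a i| ≤ (M : ℤ))
    (hb : ∀ i : Fin n, |b i| ≤ (M : ℤ)) :
    (Antitone fun i : Fin n => a i - 2 * (i : ℕ) * (M : ℤ)) ∧
    (Antitone fun i : Fin n => b i - 2 * (i : ℕ) * (M : ℤ)) ∧
    (∀ k : ℕ, k ≤ 2 * n - 2 →
      ∀ hD : (Finset.univ.filter fun ℓ : Fin n =>
          (ℓ : ℕ) ≤ k ∧ k - (ℓ : ℕ) < n).Nonempty,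
      ((Finset.univ.filter fun ℓ : Fin n =>
            (ℓ : ℕ) ≤ k ∧ k - (ℓ : ℕ) < n).inf' hD fun ℓ =>
          if h : k - (ℓ : ℕ) < n then
            (a ℓ - 2 * (ℓ : ℕ) * (M : ℤ)) +
              (b ⟨k - (ℓ : ℕ), h⟩ - 2 * ((k - (ℓ : ℕ) : ℕ) : ℤ) * (M : ℤ))
          else 0)
        = ((Finset.univ.filter fun ℓ : Fin n =>
              (ℓ : ℕ) ≤ k ∧ k - (ℓ : ℕ) < n).inf' hD fun ℓ =>
            if h : k - (ℓ : ℕ) < n then a ℓ + b ⟨k - (ℓ : ℕ), h⟩ else 0)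
          - 2 * (k : ℤ) * (M : ℤ)) := by
  have anti : ∀ f : Fin n → ℤ, (∀ i, |f i| ≤ (M : ℤ)) →
      Antitone fun i : Fin n => f i - 2 * (i : ℕ) * (M : ℤ) := by
    intro f hf i j hij
    rcases eq_or_lt_of_le hij with h | h
    · subst h; rfl
    · have hij' : (i : ℕ) + 1 ≤ (j : ℕ) := h
      have h1 : f j - f i ≤ 2 * (M : ℤ) := by
        have := abs_le.1 (hf i); have := abs_le.1 (hf j); omega
      have hji : ((i : ℕ) : ℤ) + 1 ≤ ((j : ℕ) : ℤ) := by exact_mod_cast hij'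
      simp only []
      nlinarith [Int.natCast_nonneg M]
  refine ⟨anti a ha, anti b hb, ?_⟩
  intro k hk hD
  have key : ∀ ℓ ∈ (Finset.univ.filter fun ℓ : Fin n =>
      (ℓ : ℕ) ≤ k ∧ k - (ℓ : ℕ) < n),
      (if h : k - (ℓ : ℕ) < n then
          (a ℓ - 2 * (ℓ : ℕ) * (M : ℤ)) +
            (b ⟨k - (ℓ : ℕ), h⟩ - 2 * ((k - (ℓ : ℕ) : ℕ) : ℤ) * (M : ℤ))
        else 0)
      = ((if h : k - (ℓ : ℕ) < n then a ℓ + b ⟨k - (ℓ : ℕ), h⟩ else 0)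
          - 2 * (k : ℤ) * (M : ℤ)) := by
    intro ℓ hℓ
    simp only [Finset.mem_filter] at hℓ
    obtain ⟨-, hle, hlt⟩ := hℓ
    rw [dif_pos hlt, dif_pos hlt]
    have : ((k - (ℓ : ℕ) : ℕ) : ℤ) = (k : ℤ) - ((ℓ : ℕ) : ℤ) := by
      omega
    rw [this]; ring
  rw [Finset.inf'_congr hD rfl key]
  exact Finset.apply_inf'_eq_inf'_comp hD (fun x => x - 2 * (k : ℤ) * (M : ℤ))
    (fun x y => by simp [min_def]; split <;> rfl) |>.symm
end

section
/- Let n, m_a, m_b be positive integers and let A, B : Fin n → Fin n → ℤ. Suppose for each i there are sets S i 1, …, S i m_a ⊆ Fin n whose union is Fin n such that the row function k ↦ A i k is non-decreasing on each S i o, and for each j there are sets T j 1, …, T j m_b ⊆ Fin n whose union is Fin n such that the column function k ↦ B k j is non-decreasing on each T j r. Then for all i, j: min_{k ∈ Fin n} (A i k + B k j) = min over all pairs (o, r) with S i o ∩ T j r nonempty of (A i k* + B k* j), where k* denotes the minimum element of S i o ∩ T j r. -/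
/-!
Every `k` lies in some piece `S i o ∩ T j r`, on which `k ↦ A i k + B k j` is non-decreasing,
so the value at `k` is bounded below by the value at the least element of that piece. Hence
minimizing over the least elements of the nonempty pieces loses nothing, and since these are
particular `k`, it cannot undershoot either.
-/

open Finset

theorem MonotoneOn.apply_min'_le {α β : Type*} [LinearOrder α] [Preorder β] {f : α → β}
    {s : Finset α} (hf : MonotoneOn f s) {k : α} (hk : k ∈ s) :
    f (s.min' ⟨k, hk⟩) ≤ f k :=
  hf (s.min'_mem _) hk (s.min'_le k hk)

theorem Finset.inf'_univ_eq_inf'_apply_min' {ι α β : Type*} [Fintype ι] [Fintype α]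
    [LinearOrder α] [LinearOrder β] (U : ι → Finset α) (f : α → β) (g : ι → β)
    (hcover : ∀ k, ∃ p, k ∈ U p) (hmono : ∀ p, MonotoneOn f (U p))
    (hg : ∀ p (h : (U p).Nonempty), g p = f ((U p).min' h))
    (hα : (univ : Finset α).Nonempty) (hne : (univ.filter fun p => (U p).Nonempty).Nonempty) :
    univ.inf' hα f = (univ.filter fun p => (U p).Nonempty).inf' hne g := by
  apply le_antisymm
  · refine le_inf' _ _ fun p hp => ?_
    rw [hg p (mem_filter.1 hp).2]
    exact inf'_le _ (mem_univ _)
  · refine le_inf' _ _ fun k _ => ?_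
    obtain ⟨p, hk⟩ := hcover k
    calc (univ.filter fun p => (U p).Nonempty).inf' hne g
        ≤ g p := inf'_le _ (mem_filter.2 ⟨mem_univ _, k, hk⟩)
      _ = f ((U p).min' ⟨k, hk⟩) := hg p _
      _ ≤ f k := (hmono p).apply_min'_le hk

theorem minplus_matrix_via_min_witnesses_general
    (n ma mb : ℕ) (hn : 0 < n)
    (A B : Fin n → Fin n → ℤ)
    (S : Fin n → Fin ma → Finset (Fin n))
    (T : Fin n → Fin mb → Finset (Fin n))
    (hScover : ∀ i k : Fin n, ∃ o : Fin ma, k ∈ S i o)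
    (hTcover : ∀ j k : Fin n, ∃ r : Fin mb, k ∈ T j r)
    (hSmono : ∀ (i : Fin n) (o : Fin ma),
      ∀ k ∈ S i o, ∀ k' ∈ S i o, k ≤ k' → A i k ≤ A i k')
    (hTmono : ∀ (j : Fin n) (r : Fin mb),
      ∀ k ∈ T j r, ∀ k' ∈ T j r, k ≤ k' → B k j ≤ B k' j) :
    ∀ i j : Fin n,
      ∀ hne : (Finset.univ.filter fun p : Fin ma × Fin mb =>
          (S i p.1 ∩ T j p.2).Nonempty).Nonempty,
      Finset.univ.inf' ⟨⟨0, hn⟩, Finset.mem_univ _⟩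
          (fun k : Fin n => A i k + B k j)
        = (Finset.univ.filter fun p : Fin ma × Fin mb =>
              (S i p.1 ∩ T j p.2).Nonempty).inf' hne
            (fun p => if h : (S i p.1 ∩ T j p.2).Nonempty then
                A i ((S i p.1 ∩ T j p.2).min' h) +
                  B ((S i p.1 ∩ T j p.2).min' h) j
              else 0) := by
  intro i j hne
  have hcover : ∀ k, ∃ p : Fin ma × Fin mb, k ∈ S i p.1 ∩ T j p.2 := fun k => by
    obtain ⟨o, ho⟩ := hScover i k
    obtain ⟨r, hr⟩ := hTcover j k
    exact ⟨(o, r), mem_inter.2 ⟨ho, hr⟩⟩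
  have hmono : ∀ p : Fin ma × Fin mb,
      MonotoneOn (fun k => A i k + B k j) ↑(S i p.1 ∩ T j p.2) := by
    rintro ⟨o, r⟩
    have hA : MonotoneOn (A i) (S i o) := hSmono i o
    have hB : MonotoneOn (B · j) (T j r) := hTmono j r
    exact (hA.mono inter_subset_left).add (hB.mono inter_subset_right)
  exact inf'_univ_eq_inf'_apply_min' _ _ _ hcover hmono (fun p h => dif_pos h) _ hne

theorem minplus_matrix_via_min_witnesses
    (n ma mb : ℕ) (hn : 0 < n) (hma : 0 < ma) (hmb : 0 < mb)
    (A B : Fin n → Fin n → ℤ)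
    (S : Fin n → Fin ma → Finset (Fin n))
    (T : Fin n → Fin mb → Finset (Fin n))
    (hScover : ∀ i k : Fin n, ∃ o : Fin ma, k ∈ S i o)
    (hTcover : ∀ j k : Fin n, ∃ r : Fin mb, k ∈ T j r)
    (hSmono : ∀ (i : Fin n) (o : Fin ma),
      ∀ k ∈ S i o, ∀ k' ∈ S i o, k ≤ k' → A i k ≤ A i k')
    (hTmono : ∀ (j : Fin n) (r : Fin mb),
      ∀ k ∈ T j r, ∀ k' ∈ T j r, k ≤ k' → B k j ≤ B k' j) :
    ∀ i j : Fin n,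
      ∀ hne : (Finset.univ.filter fun p : Fin ma × Fin mb =>
          (S i p.1 ∩ T j p.2).Nonempty).Nonempty,
      Finset.univ.inf' ⟨⟨0, hn⟩, Finset.mem_univ _⟩
          (fun k : Fin n => A i k + B k j)
        = (Finset.univ.filter fun p : Fin ma × Fin mb =>
              (S i p.1 ∩ T j p.2).Nonempty).inf' hne
            (fun p => if h : (S i p.1 ∩ T j p.2).Nonempty then
                A i ((S i p.1 ∩ T j p.2).min' h) +
                  B ((S i p.1 ∩ T j p.2).min' h) j
              else 0) :=
  minplus_matrix_via_min_witnesses_general n ma mb hn A B S T hScover hTcover hSmono hTmono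
end

section
/- Let n, m_a, m_b be positive integers and let A, B : Fin n → Fin n → ℤ. Suppose for each i there are sets S i 1, …, S i m_a ⊆ Fin n whose union is Fin n such that the row function k ↦ A i k is non-increasing on each S i o, and for each j there are sets T j 1, …, T j m_b ⊆ Fin n whose union is Fin n such that the column function k ↦ B k j is non-increasing on each T j r. Then for all i, j: min_{k ∈ Fin n} (A i k + B k j) = min over all pairs (o, r) with S i o ∩ T j r nonempty of (A i k* + B k* j), where k* denotes the maximum element of S i o ∩ T j r. -/
/-!
Every k lies in some piece U c of a cover on whose pieces f is non-increasing; the largest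
element of U c is then at least k, so f at it is at most f k. Hence the minimum of f over the
whole index set is attained at the maximum of some piece. For the (min,+) product the pieces are
the intersections S i o ∩ T j r, on which k ↦ A i k + B k j is non-increasing.
-/

open Finset

theorem AntitoneOn.apply_max'_le {ι α : Type*} [LinearOrder ι] [Preorder α] {f : ι → α}
    {s : Finset ι} (hf : AntitoneOn f s) {k : ι} (hk : k ∈ s) :
    f (s.max' ⟨k, hk⟩) ≤ f k :=
  hf hk (s.max'_mem _) (s.le_max' k hk)

theorem Finset.inf'_univ_eq_inf'_apply_max'_of_antitoneOn_cover
    {ι κ α : Type*} [Fintype ι] [LinearOrder ι] [Fintype κ] [LinearOrder α]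
    (f : ι → α) (U : κ → Finset ι) (d : α)
    (hcover : ∀ k, ∃ c, k ∈ U c) (hanti : ∀ c, AntitoneOn f (U c))
    (hι : (univ : Finset ι).Nonempty) (hne : (univ.filter fun c => (U c).Nonempty).Nonempty) :
    univ.inf' hι f =
      (univ.filter fun c => (U c).Nonempty).inf' hne
        (fun c => if h : (U c).Nonempty then f ((U c).max' h) else d) := by
  apply le_antisymm
  · refine le_inf' _ _ fun c hc => ?_
    rw [dif_pos (mem_filter.mp hc).2]
    exact inf'_le _ (mem_univ _)
  · obtain ⟨k, -, hk⟩ := exists_mem_eq_inf' hι f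
    obtain ⟨c, hc⟩ := hcover k
    have hUc : (U c).Nonempty := ⟨k, hc⟩
    calc _ ≤ (if h : (U c).Nonempty then f ((U c).max' h) else d) :=
          inf'_le _ (mem_filter.mpr ⟨mem_univ c, hUc⟩)
      _ = f ((U c).max' ⟨k, hc⟩) := dif_pos hUc
      _ ≤ f k := (hanti c).apply_max'_le hc
      _ = univ.inf' hι f := hk.symm

theorem minplus_matrix_via_max_witnesses_general
    (n ma mb : ℕ) (hn : 0 < n)
    (A B : Fin n → Fin n → ℤ)
    (S : Fin n → Fin ma → Finset (Fin n))
    (T : Fin n → Fin mb → Finset (Fin n))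
    (hScover : ∀ i k : Fin n, ∃ o : Fin ma, k ∈ S i o)
    (hTcover : ∀ j k : Fin n, ∃ r : Fin mb, k ∈ T j r)
    (hSmono : ∀ (i : Fin n) (o : Fin ma),
      ∀ k ∈ S i o, ∀ k' ∈ S i o, k ≤ k' → A i k ≥ A i k')
    (hTmono : ∀ (j : Fin n) (r : Fin mb),
      ∀ k ∈ T j r, ∀ k' ∈ T j r, k ≤ k' → B k j ≥ B k' j) :
    ∀ i j : Fin n,
      ∀ hne : (Finset.univ.filter fun p : Fin ma × Fin mb =>
          (S i p.1 ∩ T j p.2).Nonempty).Nonempty,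
      Finset.univ.inf' ⟨⟨0, hn⟩, Finset.mem_univ _⟩
          (fun k : Fin n => A i k + B k j)
        = (Finset.univ.filter fun p : Fin ma × Fin mb =>
              (S i p.1 ∩ T j p.2).Nonempty).inf' hne
            (fun p => if h : (S i p.1 ∩ T j p.2).Nonempty then
                A i ((S i p.1 ∩ T j p.2).max' h) +
                  B ((S i p.1 ∩ T j p.2).max' h) j
              else 0) := by
  intro i j hne
  have hcover : ∀ k, ∃ p : Fin ma × Fin mb, k ∈ S i p.1 ∩ T j p.2 := fun k => by
    obtain ⟨o, ho⟩ := hScover i k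
    obtain ⟨r, hr⟩ := hTcover j k
    exact ⟨(o, r), mem_inter.mpr ⟨ho, hr⟩⟩
  have hanti : ∀ p : Fin ma × Fin mb,
      AntitoneOn (fun k => A i k + B k j) ↑(S i p.1 ∩ T j p.2) := fun p => by
    have hA : AntitoneOn (A i) ↑(S i p.1) := hSmono i p.1
    have hB : AntitoneOn (B · j) ↑(T j p.2) := hTmono j p.2
    rw [coe_inter]
    exact (hA.mono Set.inter_subset_left).add (hB.mono Set.inter_subset_right)
  exact inf'_univ_eq_inf'_apply_max'_of_antitoneOn_cover _ _ 0 hcover hanti _ hne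

theorem minplus_matrix_via_max_witnesses
    (n ma mb : ℕ) (hn : 0 < n) (hma : 0 < ma) (hmb : 0 < mb)
    (A B : Fin n → Fin n → ℤ)
    (S : Fin n → Fin ma → Finset (Fin n))
    (T : Fin n → Fin mb → Finset (Fin n))
    (hScover : ∀ i k : Fin n, ∃ o : Fin ma, k ∈ S i o)
    (hTcover : ∀ j k : Fin n, ∃ r : Fin mb, k ∈ T j r)
    (hSmono : ∀ (i : Fin n) (o : Fin ma),
      ∀ k ∈ S i o, ∀ k' ∈ S i o, k ≤ k' → A i k ≥ A i k')
    (hTmono : ∀ (j : Fin n) (r : Fin mb),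
      ∀ k ∈ T j r, ∀ k' ∈ T j r, k ≤ k' → B k j ≥ B k' j) :
    ∀ i j : Fin n,
      ∀ hne : (Finset.univ.filter fun p : Fin ma × Fin mb =>
          (S i p.1 ∩ T j p.2).Nonempty).Nonempty,
      Finset.univ.inf' ⟨⟨0, hn⟩, Finset.mem_univ _⟩
          (fun k : Fin n => A i k + B k j)
        = (Finset.univ.filter fun p : Fin ma × Fin mb =>
              (S i p.1 ∩ T j p.2).Nonempty).inf' hne
            (fun p => if h : (S i p.1 ∩ T j p.2).Nonempty then
                A i ((S i p.1 ∩ T j p.2).max' h) +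
                  B ((S i p.1 ∩ T j p.2).max' h) j
              else 0) :=
  minplus_matrix_via_max_witnesses_general n ma mb hn A B S T hScover hTcover hSmono hTmono
end

section
/- Let n, m, c be positive integers and let A, B : Fin n → Fin n → ℤ. Suppose for each i there are sets S i 1, …, S i m ⊆ Fin n whose union is Fin n such that for each o, the row function k ↦ A i k is either non-decreasing on S i o or non-increasing on S i o; and for each j there are sets T j 1, …, T j c ⊆ Fin n whose union is Fin n such that the column function k ↦ B k j is constant on each T j r. Then for all i, j: min_{k ∈ Fin n} (A i k + B k j) = min over all pairs (o, r) with S i o ∩ T j r nonempty of min (A i k₀ + B k₀ j, A i k₁ + B k₁ j), where k₀ and k₁ denote the minimum and maximum elements of S i o ∩ T j r. -/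
theorem minplus_matrix_monotone_uniform_via_extreme_witnesses
    (n m c : ℕ) (hn : 0 < n) (hm : 0 < m) (hc : 0 < c)
    (A B : Fin n → Fin n → ℤ)
    (S : Fin n → Fin m → Finset (Fin n))
    (T : Fin n → Fin c → Finset (Fin n))
    (hScover : ∀ i k : Fin n, ∃ o : Fin m, k ∈ S i o)
    (hTcover : ∀ j k : Fin n, ∃ r : Fin c, k ∈ T j r)
    (hSmono : ∀ (i : Fin n) (o : Fin m),
      (∀ k ∈ S i o, ∀ k' ∈ S i o, k ≤ k' → A i k ≤ A i k') ∨
      (∀ k ∈ S i o, ∀ k' ∈ S i o, k ≤ k' → A i k ≥ A i k'))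
    (hTconst : ∀ (j : Fin n) (r : Fin c),
      ∀ k ∈ T j r, ∀ k' ∈ T j r, B k j = B k' j) :
    ∀ i j : Fin n,
      ∀ hne : (Finset.univ.filter fun p : Fin m × Fin c =>
          (S i p.1 ∩ T j p.2).Nonempty).Nonempty,
      Finset.univ.inf' ⟨⟨0, hn⟩, Finset.mem_univ _⟩
          (fun k : Fin n => A i k + B k j)
        = (Finset.univ.filter fun p : Fin m × Fin c =>
              (S i p.1 ∩ T j p.2).Nonempty).inf' hne
            (fun p => if h : (S i p.1 ∩ T j p.2).Nonempty then
                min (A i ((S i p.1 ∩ T j p.2).min' h) +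
                      B ((S i p.1 ∩ T j p.2).min' h) j)
                    (A i ((S i p.1 ∩ T j p.2).max' h) +
                      B ((S i p.1 ∩ T j p.2).max' h) j)
              else 0) := by
  intro i j hne
  apply le_antisymm
  · -- LHS ≤ each term of RHS
    apply Finset.le_inf'
    intro p hp
    rw [Finset.mem_filter] at hp
    obtain ⟨-, h⟩ := hp
    rw [dif_pos h]
    exact le_min (Finset.inf'_le _ (Finset.mem_univ _))
      (Finset.inf'_le _ (Finset.mem_univ _))
  · -- RHS ≤ LHS: for each k, find a covering pair
    apply Finset.le_inf'
    intro k _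
    obtain ⟨o, hko⟩ := hScover i k
    obtain ⟨r, hkr⟩ := hTcover j k
    have hkin : k ∈ S i o ∩ T j r := Finset.mem_inter.mpr ⟨hko, hkr⟩
    have h : (S i o ∩ T j r).Nonempty := ⟨k, hkin⟩
    have hpmem : (o, r) ∈ Finset.univ.filter fun p : Fin m × Fin c =>
        (S i p.1 ∩ T j p.2).Nonempty :=
      Finset.mem_filter.mpr ⟨Finset.mem_univ _, h⟩
    refine le_trans (Finset.inf'_le _ hpmem) ?_
    simp only [dif_pos h]
    set k0 := (S i o ∩ T j r).min' h with hk0def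
    set k1 := (S i o ∩ T j r).max' h with hk1def
    have hk0mem : k0 ∈ S i o ∩ T j r := Finset.min'_mem _ _
    have hk1mem : k1 ∈ S i o ∩ T j r := Finset.max'_mem _ _
    have hk0S : k0 ∈ S i o := (Finset.mem_inter.mp hk0mem).1
    have hk1S : k1 ∈ S i o := (Finset.mem_inter.mp hk1mem).1
    have hk0T : k0 ∈ T j r := (Finset.mem_inter.mp hk0mem).2
    have hk1T : k1 ∈ T j r := (Finset.mem_inter.mp hk1mem).2
    have hB0 : B k0 j = B k j := hTconst j r k0 hk0T k hkr
    have hB1 : B k1 j = B k j := hTconst j r k1 hk1T k hkr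
    have hle0 : k0 ≤ k := Finset.min'_le _ _ hkin
    have hle1 : k ≤ k1 := Finset.le_max' _ _ hkin
    rcases hSmono i o with hmono | hanti
    · have : A i k0 ≤ A i k := hmono k0 hk0S k hko hle0
      calc min (A i k0 + B k0 j) (A i k1 + B k1 j)
          ≤ A i k0 + B k0 j := min_le_left _ _
        _ ≤ A i k + B k j := by rw [hB0]; exact add_le_add_left this _
    · have : A i k1 ≤ A i k := hanti k hko k1 hk1S hle1
      calc min (A i k0 + B k0 j) (A i k1 + B k1 j)
          ≤ A i k1 + B k1 j := min_le_right _ _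
        _ ≤ A i k + B k j := by rw [hB1]; exact add_le_add_left this _
end

section
/- Let n, m_a, m_b be positive integers and let a, b : Fin n → ℤ. Suppose there are sets S₁, …, S_{m_a} ⊆ Fin n whose union is Fin n such that a is non-decreasing on each S_i, and sets T₁, …, T_{m_b} ⊆ Fin n whose union is Fin n such that b is non-increasing on each T_j. Then for every k with 0 ≤ k ≤ 2n−2: c_k = min over all pairs (i, j) such that L(i,j,k) = {ℓ ∈ S_i : 0 ≤ k−ℓ ≤ n−1 and k−ℓ ∈ T_j} is nonempty of (a ℓ* + b (k−ℓ*)), where ℓ* is the minimum element of L(i,j,k) and c is the (min,+) convolution of a and b. -/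
/-!
Write `g ℓ = a ℓ + b (k - ℓ)` for the terms of `c_k`. On a cell `L(i,j,k)` the index `ℓ ↦ k - ℓ`
runs backwards through `T_j`, so both summands of `g` are non-decreasing in `ℓ` there and the
minimum of `g` over the cell is attained at its least element. Since the cells cover all
admissible `ℓ`, minimising over the cells' least elements loses nothing.
-/

namespace Finset

variable {α ι β : Type*} [SemilatticeInf β]

theorem inf'_eq_inf'_of_forall_exists {s : Finset α} {t : Finset ι} (hs : s.Nonempty)
    (ht : t.Nonempty) {f : α → β} {g : ι → β} (hgf : ∀ i ∈ t, ∃ x ∈ s, g i = f x)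
    (hfg : ∀ x ∈ s, ∃ i ∈ t, g i ≤ f x) : s.inf' hs f = t.inf' ht g := by
  apply le_antisymm
  · refine le_inf' ht g fun i hi => ?_
    obtain ⟨x, hx, hgx⟩ := hgf i hi
    exact hgx ▸ inf'_le f hx
  · refine le_inf' hs f fun x hx => ?_
    obtain ⟨i, hi, hgx⟩ := hfg x hx
    exact inf'_le_of_le g hi hgx

end Finset

/-- Only meaningful for `ℓ ≤ k`: otherwise the truncated `k - ℓ` is `0`. -/
def minPlusConvTerm {n : ℕ} (a b : Fin n → ℤ) (k : ℕ) (ℓ : Fin n) : ℤ :=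
  if h : k - (ℓ : ℕ) < n then a ℓ + b ⟨k - (ℓ : ℕ), h⟩ else 0

section

variable {n : ℕ} {a b : Fin n → ℤ} {k : ℕ}

theorem minPlusConvTerm_eq {ℓ t : Fin n} (ht : (t : ℕ) = k - ℓ) :
    minPlusConvTerm a b k ℓ = a ℓ + b t := by
  have hlt : k - (ℓ : ℕ) < n := ht ▸ t.isLt
  rw [minPlusConvTerm, dif_pos hlt, show t = ⟨k - ℓ, hlt⟩ from Fin.ext ht]

theorem monotoneOn_minPlusConvTerm {s t : Finset (Fin n)} (ha : MonotoneOn a s)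
    (hb : AntitoneOn b t) :
    MonotoneOn (minPlusConvTerm a b k)
      (s.filter fun ℓ : Fin n => (ℓ : ℕ) ≤ k ∧ ∃ t' : Fin n, (t' : ℕ) = k - ℓ ∧ t' ∈ t) := by
  intro ℓ hℓ ℓ' hℓ' hle
  rw [Finset.mem_coe, Finset.mem_filter] at hℓ hℓ'
  obtain ⟨hℓs, -, u, hu, hut⟩ := hℓ
  obtain ⟨hℓ's, -, u', hu', hu't⟩ := hℓ'
  have hu'u : u' ≤ u := by rw [Fin.le_def] at hle ⊢; omega
  rw [minPlusConvTerm_eq hu, minPlusConvTerm_eq hu']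
  exact add_le_add (ha hℓs hℓ's hle) (hb hu't hut hu'u)

end

theorem minplus_conv_via_min_witnesses_general
    (n ma mb : ℕ)
    (a b : Fin n → ℤ)
    (S : Fin ma → Finset (Fin n)) (T : Fin mb → Finset (Fin n))
    (hScover : ∀ ℓ : Fin n, ∃ i : Fin ma, ℓ ∈ S i)
    (hTcover : ∀ ℓ : Fin n, ∃ j : Fin mb, ℓ ∈ T j)
    (hSmono : ∀ i : Fin ma, ∀ ℓ ∈ S i, ∀ ℓ' ∈ S i, ℓ ≤ ℓ' → a ℓ ≤ a ℓ')
    (hTmono : ∀ j : Fin mb, ∀ ℓ ∈ T j, ∀ ℓ' ∈ T j, ℓ ≤ ℓ' → b ℓ ≥ b ℓ')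
    (k : ℕ)
    (L : Fin ma → Fin mb → Finset (Fin n))
    (hLdef : ∀ (i : Fin ma) (j : Fin mb),
      L i j = (S i).filter fun ℓ : Fin n =>
        (ℓ : ℕ) ≤ k ∧ ∃ t : Fin n, (t : ℕ) = k - (ℓ : ℕ) ∧ t ∈ T j)
    (hD : (Finset.univ.filter fun ℓ : Fin n =>
        (ℓ : ℕ) ≤ k ∧ k - (ℓ : ℕ) < n).Nonempty)
    (hP : (Finset.univ.filter fun p : Fin ma × Fin mb =>
        (L p.1 p.2).Nonempty).Nonempty) :
    ((Finset.univ.filter fun ℓ : Fin n =>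
          (ℓ : ℕ) ≤ k ∧ k - (ℓ : ℕ) < n).inf' hD fun ℓ =>
        if h : k - (ℓ : ℕ) < n then a ℓ + b ⟨k - (ℓ : ℕ), h⟩ else 0)
      = (Finset.univ.filter fun p : Fin ma × Fin mb =>
            (L p.1 p.2).Nonempty).inf' hP
          (fun p => if h : (L p.1 p.2).Nonempty then
              (if h' : k - (((L p.1 p.2).min' h : Fin n) : ℕ) < n then
                a ((L p.1 p.2).min' h) +
                  b ⟨k - (((L p.1 p.2).min' h : Fin n) : ℕ), h'⟩
              else 0)
            else 0) := by
  have hmono (i j) : MonotoneOn (minPlusConvTerm a b k) (L i j) :=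
    hLdef i j ▸ monotoneOn_minPlusConvTerm (hSmono i) (hTmono j)
  have hmemL {i j ℓ} : ℓ ∈ L i j ↔
      ℓ ∈ S i ∧ (ℓ : ℕ) ≤ k ∧ ∃ t : Fin n, (t : ℕ) = k - ℓ ∧ t ∈ T j := by
    rw [hLdef, Finset.mem_filter]
  refine Finset.inf'_eq_inf'_of_forall_exists (f := minPlusConvTerm a b k) hD hP ?_ ?_
  · rintro ⟨i, j⟩ hij
    have hne : (L i j).Nonempty := (Finset.mem_filter.1 hij).2
    obtain ⟨-, hk, t, ht, -⟩ := hmemL.1 ((L i j).min'_mem hne)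
    refine ⟨(L i j).min' hne, ?_, dif_pos hne⟩
    exact Finset.mem_filter.2 ⟨Finset.mem_univ _, hk, ht ▸ t.isLt⟩
  · intro ℓ hℓ
    obtain ⟨hk, hlt⟩ := (Finset.mem_filter.1 hℓ).2
    obtain ⟨i, hi⟩ := hScover ℓ
    obtain ⟨j, hj⟩ := hTcover ⟨k - ℓ, hlt⟩
    have hℓL : ℓ ∈ L i j := hmemL.2 ⟨hi, hk, _, rfl, hj⟩
    have hne : (L i j).Nonempty := ⟨ℓ, hℓL⟩
    refine ⟨(i, j), by simpa using hne, ?_⟩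
    rw [dif_pos hne]
    exact hmono i j ((L i j).min'_mem hne) hℓL ((L i j).min'_le ℓ hℓL)

theorem minplus_conv_via_min_witnesses
    (n ma mb : ℕ) (hn : 0 < n) (hma : 0 < ma) (hmb : 0 < mb)
    (a b : Fin n → ℤ)
    (S : Fin ma → Finset (Fin n)) (T : Fin mb → Finset (Fin n))
    (hScover : ∀ ℓ : Fin n, ∃ i : Fin ma, ℓ ∈ S i)
    (hTcover : ∀ ℓ : Fin n, ∃ j : Fin mb, ℓ ∈ T j)
    (hSmono : ∀ i : Fin ma, ∀ ℓ ∈ S i, ∀ ℓ' ∈ S i, ℓ ≤ ℓ' → a ℓ ≤ a ℓ')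
    (hTmono : ∀ j : Fin mb, ∀ ℓ ∈ T j, ∀ ℓ' ∈ T j, ℓ ≤ ℓ' → b ℓ ≥ b ℓ')
    (k : ℕ) (hk : k ≤ 2 * n - 2)
    (L : Fin ma → Fin mb → Finset (Fin n))
    (hLdef : ∀ (i : Fin ma) (j : Fin mb),
      L i j = (S i).filter fun ℓ : Fin n =>
        (ℓ : ℕ) ≤ k ∧ ∃ t : Fin n, (t : ℕ) = k - (ℓ : ℕ) ∧ t ∈ T j)
    (hD : (Finset.univ.filter fun ℓ : Fin n =>
        (ℓ : ℕ) ≤ k ∧ k - (ℓ : ℕ) < n).Nonempty)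
    (hP : (Finset.univ.filter fun p : Fin ma × Fin mb =>
        (L p.1 p.2).Nonempty).Nonempty) :
    ((Finset.univ.filter fun ℓ : Fin n =>
          (ℓ : ℕ) ≤ k ∧ k - (ℓ : ℕ) < n).inf' hD fun ℓ =>
        if h : k - (ℓ : ℕ) < n then a ℓ + b ⟨k - (ℓ : ℕ), h⟩ else 0)
      = (Finset.univ.filter fun p : Fin ma × Fin mb =>
            (L p.1 p.2).Nonempty).inf' hP
          (fun p => if h : (L p.1 p.2).Nonempty then
              (if h' : k - (((L p.1 p.2).min' h : Fin n) : ℕ) < n then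
                a ((L p.1 p.2).min' h) +
                  b ⟨k - (((L p.1 p.2).min' h : Fin n) : ℕ), h'⟩
              else 0)
            else 0) :=
  minplus_conv_via_min_witnesses_general n ma mb a b S T hScover hTcover hSmono hTmono k L hLdef hD
    hP
end

section
/- Let n, m_a, m_b be positive integers and let a, b : Fin n → ℤ. Suppose there are sets S₁, …, S_{m_a} ⊆ Fin n whose union is Fin n such that a is non-increasing on each S_i, and sets T₁, …, T_{m_b} ⊆ Fin n whose union is Fin n such that b is non-decreasing on each T_j. Then for every k with 0 ≤ k ≤ 2n−2: c_k = min over all pairs (i, j) such that L(i,j,k) = {ℓ ∈ S_i : 0 ≤ k−ℓ ≤ n−1 and k−ℓ ∈ T_j} is nonempty of (a ℓ* + b (k−ℓ*)), where ℓ* is the maximum element of L(i,j,k) and c is the (min,+) convolution of a and b. -/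
/-!
Every candidate value `a ℓ + b (k - ℓ)` of `c_k` is dominated by the value at the largest element
`ℓ*` of a witness set `L(i, j, k)` containing `ℓ`: moving from `ℓ` up to `ℓ*` inside `S_i` does not
increase `a`, and moves `k - ℓ` down inside `T_j`, which does not increase `b`. Conversely each
`ℓ*` is itself admissible for `c_k`, so the two minima agree.
-/

open Finset

theorem Finset.inf'_eq_inf'_of_forall_exists_le {α β γ : Type*} [SemilatticeInf γ]
    {s : Finset α} {t : Finset β} (hs : s.Nonempty) (ht : t.Nonempty) {f : α → γ} {g : β → γ}
    (hst : ∀ x ∈ s, ∃ y ∈ t, g y ≤ f x) (hts : ∀ y ∈ t, ∃ x ∈ s, f x ≤ g y) :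
    s.inf' hs f = t.inf' ht g :=
  le_antisymm
    (le_inf' _ _ fun y hy => by obtain ⟨x, hx, hxy⟩ := hts y hy; exact (inf'_le f hx).trans hxy)
    (le_inf' _ _ fun x hx => by obtain ⟨y, hy, hyx⟩ := hst x hx; exact (inf'_le g hy).trans hyx)

namespace MinPlusConv

variable {n : ℕ}

-- The junk value `0` is never reached where `term` is used: there `ℓ ≤ k` and `k - ℓ < n`.
def term (a b : Fin n → ℤ) (k : ℕ) (ℓ : Fin n) : ℤ :=
  if h : k - (ℓ : ℕ) < n then a ℓ + b ⟨k - (ℓ : ℕ), h⟩ else 0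

-- The set `L(i, j, k)` of the paper, for `s = S_i` and `t = T_j`.
def witnesses (s t : Finset (Fin n)) (k : ℕ) : Finset (Fin n) :=
  s.filter fun ℓ => (ℓ : ℕ) ≤ k ∧ ∃ u : Fin n, (u : ℕ) = k - ℓ ∧ u ∈ t

theorem mem_witnesses_iff {s t : Finset (Fin n)} {k : ℕ} {ℓ : Fin n} :
    ℓ ∈ witnesses s t k ↔
      ℓ ∈ s ∧ ∃ h : (ℓ : ℕ) ≤ k ∧ k - (ℓ : ℕ) < n, (⟨k - ℓ, h.2⟩ : Fin n) ∈ t := by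
  refine mem_filter.trans (and_congr_right fun _ => ⟨?_, ?_⟩)
  · rintro ⟨hℓk, u, hu, hut⟩
    have hkℓ : k - (ℓ : ℕ) < n := hu ▸ u.isLt
    exact ⟨⟨hℓk, hkℓ⟩, by rwa [show (⟨k - ℓ, hkℓ⟩ : Fin n) = u from Fin.ext hu.symm]⟩
  · rintro ⟨⟨hℓk, _⟩, hut⟩
    exact ⟨hℓk, _, rfl, hut⟩

theorem term_le_term_of_mem_witnesses {a b : Fin n → ℤ} {s t : Finset (Fin n)} {k : ℕ}
    (ha : AntitoneOn a s) (hb : MonotoneOn b t) {ℓ ℓ' : Fin n}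
    (hℓ : ℓ ∈ witnesses s t k) (hℓ' : ℓ' ∈ witnesses s t k) (hle : ℓ ≤ ℓ') :
    term a b k ℓ' ≤ term a b k ℓ := by
  obtain ⟨hs, ⟨_, hkℓ⟩, ht⟩ := mem_witnesses_iff.1 hℓ
  obtain ⟨hs', ⟨_, hkℓ'⟩, ht'⟩ := mem_witnesses_iff.1 hℓ'
  rw [term, term, dif_pos hkℓ, dif_pos hkℓ']
  have hsub : (⟨k - ℓ', hkℓ'⟩ : Fin n) ≤ ⟨k - ℓ, hkℓ⟩ := Nat.sub_le_sub_left hle k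
  exact add_le_add (ha hs hs' hle) (hb ht' ht hsub)

theorem term_max'_le {a b : Fin n → ℤ} {s t : Finset (Fin n)} {k : ℕ}
    (ha : AntitoneOn a s) (hb : MonotoneOn b t) {ℓ : Fin n} (hℓ : ℓ ∈ witnesses s t k) :
    term a b k ((witnesses s t k).max' ⟨ℓ, hℓ⟩) ≤ term a b k ℓ :=
  term_le_term_of_mem_witnesses ha hb hℓ (max'_mem _ _) (le_max' _ _ hℓ)

end MinPlusConv

open MinPlusConv in
theorem minplus_conv_via_max_witnesses_general
    (n ma mb : ℕ)
    (a b : Fin n → ℤ)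
    (S : Fin ma → Finset (Fin n)) (T : Fin mb → Finset (Fin n))
    (hScover : ∀ ℓ : Fin n, ∃ i : Fin ma, ℓ ∈ S i)
    (hTcover : ∀ ℓ : Fin n, ∃ j : Fin mb, ℓ ∈ T j)
    (hSmono : ∀ i : Fin ma, ∀ ℓ ∈ S i, ∀ ℓ' ∈ S i, ℓ ≤ ℓ' → a ℓ ≥ a ℓ')
    (hTmono : ∀ j : Fin mb, ∀ ℓ ∈ T j, ∀ ℓ' ∈ T j, ℓ ≤ ℓ' → b ℓ ≤ b ℓ')
    (k : ℕ)
    (L : Fin ma → Fin mb → Finset (Fin n))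
    (hLdef : ∀ (i : Fin ma) (j : Fin mb),
      L i j = (S i).filter fun ℓ : Fin n =>
        (ℓ : ℕ) ≤ k ∧ ∃ t : Fin n, (t : ℕ) = k - (ℓ : ℕ) ∧ t ∈ T j)
    (hD : (Finset.univ.filter fun ℓ : Fin n =>
        (ℓ : ℕ) ≤ k ∧ k - (ℓ : ℕ) < n).Nonempty)
    (hP : (Finset.univ.filter fun p : Fin ma × Fin mb =>
        (L p.1 p.2).Nonempty).Nonempty) :
    ((Finset.univ.filter fun ℓ : Fin n =>
          (ℓ : ℕ) ≤ k ∧ k - (ℓ : ℕ) < n).inf' hD fun ℓ =>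
        if h : k - (ℓ : ℕ) < n then a ℓ + b ⟨k - (ℓ : ℕ), h⟩ else 0)
      = (Finset.univ.filter fun p : Fin ma × Fin mb =>
            (L p.1 p.2).Nonempty).inf' hP
          (fun p => if h : (L p.1 p.2).Nonempty then
              (if h' : k - (((L p.1 p.2).max' h : Fin n) : ℕ) < n then
                a ((L p.1 p.2).max' h) +
                  b ⟨k - (((L p.1 p.2).max' h : Fin n) : ℕ), h'⟩
              else 0)
            else 0) := by
  obtain rfl : L = fun i j => witnesses (S i) (T j) k := funext₂ hLdef
  refine inf'_eq_inf'_of_forall_exists_le hD hP (f := term a b k) ?_ ?_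
  · intro ℓ hℓ
    obtain ⟨-, hℓk, hkℓ⟩ := mem_filter.1 hℓ
    obtain ⟨i, hi⟩ := hScover ℓ
    obtain ⟨j, hj⟩ := hTcover ⟨k - ℓ, hkℓ⟩
    have hℓL : ℓ ∈ witnesses (S i) (T j) k := mem_witnesses_iff.2 ⟨hi, ⟨hℓk, hkℓ⟩, hj⟩
    refine ⟨(i, j), mem_filter.2 ⟨mem_univ _, ℓ, hℓL⟩, ?_⟩
    rw [dif_pos ⟨ℓ, hℓL⟩]
    exact term_max'_le (hSmono i) (hTmono j) hℓL
  · rintro ⟨i, j⟩ hp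
    have hne : (witnesses (S i) (T j) k).Nonempty := (mem_filter.1 hp).2
    refine ⟨_, mem_filter.2 ⟨mem_univ _, (mem_witnesses_iff.1 (max'_mem _ hne)).2.1⟩, ?_⟩
    rw [dif_pos hne]
    rfl

theorem minplus_conv_via_max_witnesses
    (n ma mb : ℕ) (hn : 0 < n) (hma : 0 < ma) (hmb : 0 < mb)
    (a b : Fin n → ℤ)
    (S : Fin ma → Finset (Fin n)) (T : Fin mb → Finset (Fin n))
    (hScover : ∀ ℓ : Fin n, ∃ i : Fin ma, ℓ ∈ S i)
    (hTcover : ∀ ℓ : Fin n, ∃ j : Fin mb, ℓ ∈ T j)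
    (hSmono : ∀ i : Fin ma, ∀ ℓ ∈ S i, ∀ ℓ' ∈ S i, ℓ ≤ ℓ' → a ℓ ≥ a ℓ')
    (hTmono : ∀ j : Fin mb, ∀ ℓ ∈ T j, ∀ ℓ' ∈ T j, ℓ ≤ ℓ' → b ℓ ≤ b ℓ')
    (k : ℕ) (hk : k ≤ 2 * n - 2)
    (L : Fin ma → Fin mb → Finset (Fin n))
    (hLdef : ∀ (i : Fin ma) (j : Fin mb),
      L i j = (S i).filter fun ℓ : Fin n =>
        (ℓ : ℕ) ≤ k ∧ ∃ t : Fin n, (t : ℕ) = k - (ℓ : ℕ) ∧ t ∈ T j)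
    (hD : (Finset.univ.filter fun ℓ : Fin n =>
        (ℓ : ℕ) ≤ k ∧ k - (ℓ : ℕ) < n).Nonempty)
    (hP : (Finset.univ.filter fun p : Fin ma × Fin mb =>
        (L p.1 p.2).Nonempty).Nonempty) :
    ((Finset.univ.filter fun ℓ : Fin n =>
          (ℓ : ℕ) ≤ k ∧ k - (ℓ : ℕ) < n).inf' hD fun ℓ =>
        if h : k - (ℓ : ℕ) < n then a ℓ + b ⟨k - (ℓ : ℕ), h⟩ else 0)
      = (Finset.univ.filter fun p : Fin ma × Fin mb =>
            (L p.1 p.2).Nonempty).inf' hP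
          (fun p => if h : (L p.1 p.2).Nonempty then
              (if h' : k - (((L p.1 p.2).max' h : Fin n) : ℕ) < n then
                a ((L p.1 p.2).max' h) +
                  b ⟨k - (((L p.1 p.2).max' h : Fin n) : ℕ), h'⟩
              else 0)
            else 0) :=
  minplus_conv_via_max_witnesses_general n ma mb a b S T hScover hTcover hSmono hTmono k L hLdef hD
    hP
end

section
/- Let n, p, h be positive integers and let a, b : Fin n → ℤ. Suppose there are sets G₁, …, G_p ⊆ Fin n whose union is Fin n such that for all i < i', every value a x with x ∈ G_i is at most every value a y with y ∈ G_{i'}; and there are sets T₁, …, T_h ⊆ Fin n whose union is Fin n such that b is constant on each T_j. Then for every k with 0 ≤ k ≤ 2n−2: c_k = min over all j ∈ {1,…,h} such that W(j,k) = {ℓ : 0 ≤ ℓ ≤ n−1, 0 ≤ k−ℓ ≤ n−1, k−ℓ ∈ T_j} is nonempty of min_{ℓ ∈ G_{m(j,k)} ∩ W(j,k)} (a ℓ + b (k−ℓ)), where m(j,k) is the minimal index i with G_i ∩ W(j,k) nonempty and c is the (min,+) convolution of a and b. -/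
theorem minplus_conv_via_sorted_groups_uniform
    (n p h : ℕ) (hn : 0 < n) (hp : 0 < p) (hh : 0 < h)
    (a b : Fin n → ℤ)
    (G : Fin p → Finset (Fin n)) (T : Fin h → Finset (Fin n))
    (hGcover : ∀ x : Fin n, ∃ i : Fin p, x ∈ G i)
    (hGsorted : ∀ i i' : Fin p, i < i' → ∀ x ∈ G i, ∀ y ∈ G i', a x ≤ a y)
    (hTcover : ∀ x : Fin n, ∃ j : Fin h, x ∈ T j)
    (hTconst : ∀ j : Fin h, ∀ x ∈ T j, ∀ y ∈ T j, b x = b y)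
    (k : ℕ) (hk : k ≤ 2 * n - 2)
    (W : Fin h → Finset (Fin n))
    (hWdef : ∀ j : Fin h, W j = Finset.univ.filter fun ℓ : Fin n =>
        (ℓ : ℕ) ≤ k ∧ ∃ t : Fin n, (t : ℕ) = k - (ℓ : ℕ) ∧ t ∈ T j)
    (m : Fin h → Fin p)
    (hm : ∀ j : Fin h, (W j).Nonempty →
        (G (m j) ∩ W j).Nonempty ∧ ∀ i : Fin p, i < m j → ¬(G i ∩ W j).Nonempty)
    (hD : (Finset.univ.filter fun ℓ : Fin n =>
        (ℓ : ℕ) ≤ k ∧ k - (ℓ : ℕ) < n).Nonempty)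
    (hJ : (Finset.univ.filter fun j : Fin h => (W j).Nonempty).Nonempty) :
    ((Finset.univ.filter fun ℓ : Fin n =>
          (ℓ : ℕ) ≤ k ∧ k - (ℓ : ℕ) < n).inf' hD fun ℓ =>
        if hℓ : k - (ℓ : ℕ) < n then a ℓ + b ⟨k - (ℓ : ℕ), hℓ⟩ else 0)
      = (Finset.univ.filter fun j : Fin h => (W j).Nonempty).inf' hJ
          (fun j => if hj : (G (m j) ∩ W j).Nonempty then
              (G (m j) ∩ W j).inf' hj
                (fun ℓ => if hℓ : k - (ℓ : ℕ) < n then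
                    a ℓ + b ⟨k - (ℓ : ℕ), hℓ⟩ else 0)
            else 0) := by
  set f : Fin n → ℤ := fun ℓ =>
    if hℓ : k - (ℓ : ℕ) < n then a ℓ + b ⟨k - (ℓ : ℕ), hℓ⟩ else 0 with hf
  -- membership in W j gives the key facts
  have hWmem : ∀ j : Fin h, ∀ ℓ ∈ W j, (ℓ : ℕ) ≤ k ∧
      ∃ hlt : k - (ℓ : ℕ) < n, (⟨k - (ℓ : ℕ), hlt⟩ : Fin n) ∈ T j := by
    intro j ℓ hℓ
    rw [hWdef j, Finset.mem_filter] at hℓ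
    obtain ⟨-, hle, t, ht, htT⟩ := hℓ
    refine ⟨hle, ?_⟩
    have hlt : k - (ℓ : ℕ) < n := ht ▸ t.isLt
    refine ⟨hlt, ?_⟩
    have : (⟨k - (ℓ : ℕ), hlt⟩ : Fin n) = t := by
      apply Fin.ext; simp [ht]
    rw [this]; exact htT
  have hWD : ∀ j : Fin h, ∀ ℓ ∈ W j,
      ℓ ∈ Finset.univ.filter fun ℓ : Fin n => (ℓ : ℕ) ≤ k ∧ k - (ℓ : ℕ) < n := by
    intro j ℓ hℓ
    obtain ⟨hle, hlt, -⟩ := hWmem j ℓ hℓ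
    simp [hle, hlt]
  apply le_antisymm
  · apply Finset.le_inf'
    intro j hj
    rw [Finset.mem_filter] at hj
    have hne := (hm j hj.2).1
    rw [dif_pos hne]
    apply Finset.le_inf'
    intro ℓ hℓ
    exact Finset.inf'_le _ (hWD j ℓ (Finset.mem_inter.mp hℓ).2)
  · apply Finset.le_inf'
    intro ℓ hℓ
    rw [Finset.mem_filter] at hℓ
    obtain ⟨-, hle, hlt⟩ := hℓ
    set t : Fin n := ⟨k - (ℓ : ℕ), hlt⟩ with htdef
    obtain ⟨j, hjT⟩ := hTcover t
    have hℓW : ℓ ∈ W j := by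
      rw [hWdef j, Finset.mem_filter]
      exact ⟨Finset.mem_univ _, hle, t, rfl, hjT⟩
    have hWne : (W j).Nonempty := ⟨ℓ, hℓW⟩
    have hjJ : j ∈ Finset.univ.filter fun j : Fin h => (W j).Nonempty := by
      simp [hWne]
    refine le_trans (Finset.inf'_le _ hjJ) ?_
    obtain ⟨hne, hmin⟩ := hm j hWne
    rw [dif_pos hne]
    obtain ⟨i, hiG⟩ := hGcover ℓ
    have hmle : m j ≤ i := by
      by_contra hcon
      exact hmin i (lt_of_not_ge hcon) ⟨ℓ, Finset.mem_inter.mpr ⟨hiG, hℓW⟩⟩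
    rcases eq_or_lt_of_le hmle with heq | hltm
    · exact Finset.inf'_le _ (Finset.mem_inter.mpr ⟨heq ▸ hiG, hℓW⟩)
    · obtain ⟨ℓ', hℓ'⟩ := hne
      rw [Finset.mem_inter] at hℓ'
      refine le_trans (Finset.inf'_le _ (Finset.mem_inter.mpr hℓ')) ?_
      obtain ⟨hle', hlt', hT'⟩ := hWmem j ℓ' hℓ'.2
      have ha : a ℓ' ≤ a ℓ := hGsorted (m j) i hltm ℓ' hℓ'.1 ℓ hiG
      have hb : b ⟨k - (ℓ' : ℕ), hlt'⟩ = b t := hTconst j _ hT' _ hjT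
      simp only [hf, dif_pos hlt', dif_pos hlt]
      rw [hb]
      exact add_le_add_left ha _
end
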